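/- For 0 ≤ k < n, the hook Schur function satisfies s_{(n-k,1^k)}[X] = (-q)^{n-k-1} Σ C_α[X;q], the sum over compositions α of n with first part α_1 ≥ n-k. -/

import Mathlib

open Finset MvPolynomial

noncomputable section

/-- Base field `F = ℚ(q)`. -/
abbrev F : Type := RatFunc ℚ

/-- The parameter `q`. -/
noncomputable def q : F := RatFunc.X

/-- The ring of symmetric functions `Λ = F[p₁, p₂, p₃, …]`, where the variable
`X k` represents the power sum `p_{k+1}`. -/
abbrev SymF : Type := MvPolynomial ℕ F

/-- `pp k` is the power sum `p_k` for `k ≥ 1`. -/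
noncomputable def pp (k : ℕ) : SymF := MvPolynomial.X (k - 1)

/-- Complete homogeneous symmetric functions, via Newton's identity
`(n+1) h_{n+1} = ∑_{k=1}^{n+1} p_k h_{n+1-k}`. -/
noncomputable def hN : ℕ → SymF
  | 0 => 1
  | n + 1 => ((n : F) + 1)⁻¹ • ∑ k ∈ Finset.range (n + 1), pp (k + 1) * hN (n - k)
  termination_by n => n
  decreasing_by omega

/-- Elementary symmetric functions, via Newton's identity
`(n+1) e_{n+1} = ∑_{k=1}^{n+1} (-1)^{k-1} p_k e_{n+1-k}`. -/
noncomputable def eN : ℕ → SymF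
  | 0 => 1
  | n + 1 => ((n : F) + 1)⁻¹ • ∑ k ∈ Finset.range (n + 1), ((-1 : F) ^ k) • (pp (k + 1) * eN (n - k))
  termination_by n => n
  decreasing_by omega

/-- `hh m = h_m` for `m ≥ 0` and `0` for `m < 0`. -/
noncomputable def hh (m : ℤ) : SymF := if 0 ≤ m then hN m.toNat else 0

/-- `ee m = e_m` for `m ≥ 0` and `0` for `m < 0`. -/
noncomputable def ee (m : ℤ) : SymF := if 0 ≤ m then eN m.toNat else 0

/-- The plethystic translation `f[X] ↦ f[X + (1-q)z]`, determined by
`p_k ↦ p_k + (1-q^k) z^k`.  The coefficient of `z^r` computes `h_r[X(1-q)]^⊥ f`. -/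
noncomputable def Tq : SymF →ₐ[F] Polynomial SymF :=
  MvPolynomial.aeval fun k =>
    Polynomial.C (MvPolynomial.X k) +
      Polynomial.C (MvPolynomial.C (1 - q ^ (k + 1))) * Polynomial.X ^ (k + 1)

/-- The operator `h_r[X(1-q)]^⊥`. -/
noncomputable def Dq (r : ℕ) (P : SymF) : SymF := (Tq P).coeff r

/-- The plethystic translation `f[X] ↦ f[X - z]`, determined by `p_k ↦ p_k - z^k`;
one has `f[X - z] = ∑_k (-z)^k (e_k^⊥ f)[X]`. -/
noncomputable def T1 : SymF →ₐ[F] Polynomial SymF :=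
  MvPolynomial.aeval fun k =>
    Polynomial.C (MvPolynomial.X k) - Polynomial.X ^ (k + 1)

/-- The operator `e_r^⊥`. -/
noncomputable def eperp (r : ℕ) (P : SymF) : SymF := ((-1 : F) ^ r) • (T1 P).coeff r

/-- The Hall–Littlewood creation operator
`ℂ_m P = (-1/q)^{m-1} ∑_{r ≥ 0} q^{-r} h_{m+r} · (h_r[X(1-q)])^⊥ P`
(the sum is finite: terms with `r > deg_z (Tq P)` vanish). -/
noncomputable def Cop (m : ℤ) (P : SymF) : SymF :=
  ((-q⁻¹ : F) ^ (m - 1)) •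
    ∑ r ∈ Finset.range ((Tq P).natDegree + 1), ((q⁻¹ : F) ^ r) • (hh (m + r) * Dq r P)

/-- The creation operator `𝔹_m P = ∑_{r ≥ 0} (-1)^r e_{m+r} · (h_r[X(1-q)])^⊥ P`. -/
noncomputable def Bop (m : ℤ) (P : SymF) : SymF :=
  ∑ r ∈ Finset.range ((Tq P).natDegree + 1), ((-1 : F) ^ r) • (ee (m + r) * Dq r P)

/-- The Bernstein (Schur) creation operator `S_m P = ∑_{r ≥ 0} (-1)^r h_{m+r} · e_r^⊥ P`. -/
noncomputable def Sop (m : ℤ) (P : SymF) : SymF :=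
  ∑ r ∈ Finset.range ((T1 P).natDegree + 1), ((-1 : F) ^ r) • (hh (m + r) * eperp r P)

/-- `C_α[X;q] = ℂ_{α₁} ℂ_{α₂} ⋯ ℂ_{α_ℓ}(1)`. -/
noncomputable def Cfun : List ℕ → SymF
  | [] => 1
  | a :: l => Cop a (Cfun l)

/-- `B_α[X;q] = 𝔹_{α_ℓ} 𝔹_{α_{ℓ-1}} ⋯ 𝔹_{α₁}(1)`. -/
noncomputable def Bfun (l : List ℕ) : SymF := l.foldl (fun acc a => Bop a acc) 1

end

/-- The touch set `{0} ∪ Des(c)` of a composition `c` of `n`: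
the set of partial sums `c₁ + ⋯ + c_i` for `0 ≤ i < ℓ(c)` (0-based touch rows). -/
def touchSet {n : ℕ} (c : Composition n) : Finset ℕ :=
  (Finset.range c.length).image fun i => c.sizeUpTo i

/-- The descent set of a composition: its proper nonzero partial sums. -/
def DesSet {n : ℕ} (c : Composition n) : Finset ℕ := (touchSet c).erase 0

/-- `Refines β α` means `β ≤ α`: `β` is finer than `α`, i.e. `Des(α) ⊆ Des(β)`. -/
abbrev Refines {n : ℕ} (β α : Composition n) : Prop := touchSet α ⊆ touchSet β

/-- `doffC α β = doff_α(DP(β))` for `β ≤ α`: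
`∑_{k=1}^{ℓ(α)} (ℓ(α)-k) r_k` where `r_k` is the number of parts of `β`
lying inside the `k`-th part of `α`. -/
def doffC {n : ℕ} (α β : Composition n) : ℕ :=
  ∑ k ∈ Finset.range α.length,
    (α.length - 1 - k) *
      ((touchSet β).filter fun s => α.sizeUpTo k ≤ s ∧ s < α.sizeUpTo (k + 1)).card

/-- The reversed composition. -/
def revC {n : ℕ} (c : Composition n) : Composition n :=
  ⟨c.blocks.reverse, fun hi => c.blocks_pos (List.mem_reverse.mp hi), by
    rw [List.sum_reverse]; exact c.blocks_sum⟩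

/-- A Dyck path from `(0,0)` to `(n,n)`, encoded by its arm sequence:
`arm i` is the number of cells between the path and the diagonal in row `i+1`
(rows are 0-indexed here). -/
structure DyckPath (n : ℕ) where
  arm : ℕ → ℕ
  arm_zero : 0 < n → arm 0 = 0
  arm_step : ∀ i, i + 1 < n → arm (i + 1) ≤ arm i + 1
  arm_outside : ∀ i, n ≤ i → arm i = 0

/-- `area(D) = ∑ᵢ aᵢ`. -/
def area {n : ℕ} (D : DyckPath n) : ℕ := ∑ i ∈ Finset.range n, D.arm i

/-- `dinv(D) = #{(i,j) : i < j, aᵢ - aⱼ ∈ {0,1}}`. -/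
def dinv {n : ℕ} (D : DyckPath n) : ℕ :=
  ((Finset.range n ×ˢ Finset.range n).filter fun p =>
      p.1 < p.2 ∧ (D.arm p.1 = D.arm p.2 ∨ D.arm p.1 = D.arm p.2 + 1)).card

/-- `IsTouch D α` says that `touch(D) = α`: the rows where the arm vanishes are
exactly the partial sums of `α`. -/
def IsTouch {n : ℕ} (D : DyckPath n) (α : Composition n) : Prop :=
  ∀ i < n, (D.arm i = 0 ↔ i ∈ touchSet α)

/-- `doff_α(D)`, for a path `D` whose touch composition refines `α`. -/
def doffD {n : ℕ} (α : Composition n) (D : DyckPath n) : ℕ :=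
  ∑ k ∈ Finset.range α.length,
    (α.length - 1 - k) *
      ((Finset.Ico (α.sizeUpTo k) (α.sizeUpTo (k + 1))).filter fun i => D.arm i = 0).card

instance {n : ℕ} : DecidableEq (Composition n) := fun a b =>
  decidable_of_iff (a.blocks = b.blocks) ⟨fun h => by cases a; cases b; simpa using h,
    fun h => by rw [h]⟩

noncomputable section

/-- Plethystic evaluation at the alphabet `1 - q`: the algebra map `p_k ↦ 1 - q^k`. -/
noncomputable def evOneMinusQ : SymF →ₐ[F] F := MvPolynomial.aeval fun k => 1 - q ^ (k + 1)

/-- The cells of the Young diagram of a partition given as a (weakly decreasing)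
list of parts: `(i, j)` with `j < lᵢ` (row `i`, column `j`, both 0-based). -/
def pcells (l : List ℕ) : Finset (ℕ × ℕ) :=
  (Finset.range l.length ×ˢ Finset.range (l.foldr max 0)).filter fun c => c.2 < l.getD c.1 0

/-- The arm of a cell: number of cells strictly to its right in its row. -/
def armC (l : List ℕ) (c : ℕ × ℕ) : ℕ := l.getD c.1 0 - c.2 - 1

/-- The leg of a cell: number of cells of the diagram in its column in later rows. -/
def legC (l : List ℕ) (c : ℕ × ℕ) : ℕ :=
  ((Finset.Ico (c.1 + 1) l.length).filter fun i => c.2 < l.getD i 0).card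

/-- The `k`-th part (`k ≥ 1`) of the conjugate partition: `μ'_k = #{i : μᵢ ≥ k}`. -/
def conjPart (l : List ℕ) (k : ℕ) : ℕ := l.countP fun x => k ≤ x

/-- The multiplicity `m_i(μ')` of `i` among the parts of the conjugate partition. -/
def mConj (l : List ℕ) (i : ℕ) : ℕ :=
  ((Finset.Icc 1 l.headI).filter fun k => conjPart l k = i).card

/-- `n(μ') = ∑ (k-1) μ'_k`. -/
def nConj (l : List ℕ) : ℕ := ∑ k ∈ Finset.Icc 1 l.headI, (k - 1) * conjPart l k

/-- The `q`-Pochhammer symbol `(q;q)_k = ∏_{j=1}^k (1 - q^j)` as an element of `F`. -/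
noncomputable def qpoch (k : ℕ) : F := ∏ j ∈ Finset.Icc 1 k, (1 - q ^ j)

end
/-!
Grouping the compositions `α ⊨ n` with `α₁ ≥ n - k` by their first part gives
`∑ C_α = ∑_{j ≤ k} ℂ_{n-j} (∑_{β ⊨ j} C_β)`, and `∑_{β ⊨ j} C_β = e_j` by induction on `j`.
On `e_j` the creation operator is explicit: comparing Newton's differential equations for the
generating series gives `e_j[X + (1-q)z] = ∑_r e_{j-r}[X] e_r[1-q] z^r`, hence
`h_r[X(1-q)]^⊥ e_j = e_r[1-q] e_{j-r}`, where `e_r[1-q] = (1-q)(-q)^{r-1}` for `r ≥ 1`.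
In `∑_{j ≤ k} ℂ_{n-j} e_j` the coefficient of `h_{n-u} e_u` is then a multiple of
`∑_{r ≤ k-u} (-1)^r e_r[1-q] = q^{k-u}`, which leaves
`(-q)^{k+1-n} ∑_{u ≤ k} (-1)^{k-u} h_{n-u} e_u`.
For `n = k + 1` this is `e_n` because `E(t) H(-t) = 1`, which is the induction step.
-/

open scoped PowerSeries

namespace PowerSeries

variable {R S : Type*} [CommRing R] [CommRing S]

theorem derivative_map (φ : R →+* S) (f : R⟦X⟧) :
    d⁄dX S (map φ f) = map φ (d⁄dX R f) := by
  ext n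
  simp [coeff_derivative]

theorem derivative_rescale (a : R) (f : R⟦X⟧) :
    d⁄dX R (rescale a f) = C a * rescale a (d⁄dX R f) := by
  ext n
  simp only [coeff_derivative, coeff_rescale, coeff_C_mul]
  ring

theorem derivative_mul (f g : R⟦X⟧) :
    d⁄dX R (f * g) = d⁄dX R f * g + f * d⁄dX R g := by
  rw [Derivation.leibniz, smul_eq_mul, smul_eq_mul, add_comm, mul_comm g]

theorem eq_of_derivative_eq_mul [IsAddTorsionFree R] {a f g : R⟦X⟧}
    (hf : d⁄dX R f = a * f) (hg : d⁄dX R g = a * g)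
    (hf0 : constantCoeff f = 1) (hg0 : constantCoeff g = 1) : f = g := by
  obtain ⟨u, rfl⟩ : IsUnit f := isUnit_iff_constantCoeff.mpr (hf0 ▸ isUnit_one)
  have hu : (↑u⁻¹ : R⟦X⟧) * u = 1 := u.inv_mul
  have hquot : g * (↑u⁻¹ : R⟦X⟧) = 1 := by
    refine derivative.ext ?_ ?_
    · rw [derivative_mul, derivative_inv, hf, hg, derivative_one]
      linear_combination (-(g * a * ↑u⁻¹)) * hu
    · have := congrArg constantCoeff hu
      simp only [map_mul, map_one, hf0, mul_one] at this
      simp [hg0, this]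
  calc (u : R⟦X⟧) = g * (↑u⁻¹ : R⟦X⟧) * u := by rw [hquot, one_mul]
    _ = g := by rw [mul_assoc, hu, mul_one]

end PowerSeries

lemma List.headI_cons_tail_of_headI_ne_zero {l : List ℕ} (h : l.headI ≠ 0) :
    l.headI :: l.tail = l := by
  cases l with
  | nil => exact absurd rfl h
  | cons a t => rfl

lemma Composition.headI_add_sum_tail {n : ℕ} (α : Composition n) :
    α.blocks.headI + α.blocks.tail.sum = n := by
  rcases α with ⟨_ | ⟨a, t⟩, _, rfl⟩ <;> simp

lemma sum_compositions_sub_headI_eq {M : Type*} [AddCommMonoid M] (g : List ℕ → M) {n j : ℕ}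
    (hj : j < n) :
    ∑ α ∈ univ.filter (fun α : Composition n => n - α.blocks.headI = j), g α.blocks =
      ∑ β : Composition j, g ((n - j) :: β.blocks) := by
  have hcons : ∀ α : Composition n, n - α.blocks.headI = j →
      (n - j) :: α.blocks.tail = α.blocks :=
    fun α hα => by
      have := α.headI_add_sum_tail
      rw [show n - j = α.blocks.headI by omega]
      exact List.headI_cons_tail_of_headI_ne_zero (by omega)
  refine sum_bij'
    (fun α hα => ⟨α.blocks.tail, fun hi => α.blocks_pos (List.mem_of_mem_tail hi),
      by have := α.headI_add_sum_tail; have := (mem_filter.mp hα).2; omega⟩)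
    (fun β _ => ⟨(n - j) :: β.blocks, fun hi => ?_,
      by rw [List.sum_cons, β.blocks_sum]; omega⟩)
    (fun _ _ => mem_univ _) (fun β _ => by simp; omega)
    (fun α hα => Composition.ext (hcons α (mem_filter.mp hα).2))
    (fun β _ => Composition.ext rfl)
    (fun α hα => congrArg g (hcons α (mem_filter.mp hα).2).symm)
  rcases List.mem_cons.mp hi with rfl | hi
  · omega
  · exact β.blocks_pos hi

lemma sum_compositions_le_headI {M : Type*} [AddCommMonoid M] (g : List ℕ → M) {n K : ℕ}
    (hK : K < n) :
    ∑ α ∈ univ.filter (fun α : Composition n => n - K ≤ α.blocks.headI), g α.blocks =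
      ∑ j ∈ range (K + 1), ∑ β : Composition j, g ((n - j) :: β.blocks) := by
  rw [← sum_fiberwise_of_maps_to (g := fun α : Composition n => n - α.blocks.headI)
    (t := range (K + 1)) (fun α hα => by simp at hα ⊢; omega)]
  refine sum_congr rfl fun j hj => ?_
  rw [filter_filter, ← sum_compositions_sub_headI_eq g (by simp at hj; omega)]
  congr 1
  ext α
  simp at hj ⊢
  omega

lemma Composition.one_le_headI {n : ℕ} (α : Composition (n + 1)) : 1 ≤ α.blocks.headI := by
  cases hb : α.blocks with
  | nil => exact absurd (α.blocks_eq_nil.mp hb) n.succ_ne_zero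
  | cons a t => exact α.one_le_blocks (by rw [hb]; exact List.mem_cons_self)

lemma q_ne_zero : q ≠ 0 := RatFunc.X_ne_zero

noncomputable def eOneMinusQ : ℕ → F
  | 0 => 1
  | r + 1 => (1 - q) * (-q) ^ r

lemma sum_antidiagonal_eOneMinusQ (n : ℕ) :
    ∑ x ∈ antidiagonal n, (-1 : F) ^ x.1 * (1 - q ^ (x.1 + 1)) * eOneMinusQ x.2 =
      (n + 1) * eOneMinusQ (n + 1) := by
  induction n with
  | zero => simp [eOneMinusQ]
  | succ n ih =>
    set a : ℕ → F := fun i => (-1 : F) ^ i * (1 - q ^ (i + 1))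
    -- `eOneMinusQ (j + 1) = -q * eOneMinusQ j` except at `j = 0`
    have hshift : ∑ x ∈ antidiagonal n, a x.1 * eOneMinusQ (x.2 + 1) =
        ∑ x ∈ antidiagonal n,
          (-q * (a x.1 * eOneMinusQ x.2) + if (n, 0) = x then a n else 0) := by
      refine sum_congr rfl fun x hx => ?_
      rcases x with ⟨i, _ | j⟩
      · obtain rfl : i = n := by simpa using hx
        simp [eOneMinusQ]
        ring
      · simp [eOneMinusQ, pow_succ]
        ring
    rw [Nat.sum_antidiagonal_succ', hshift, sum_add_distrib, ← mul_sum, ih, sum_ite_eq,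
      if_pos (by simp)]
    simp only [a, eOneMinusQ, neg_pow q]
    push_cast
    ring

lemma sum_neg_inv_q_pow_mul_eOneMinusQ (s : ℕ) :
    ∑ r ∈ range (s + 1), (-q⁻¹) ^ (s - r) * q⁻¹ ^ r * eOneMinusQ r = (-1 : F) ^ s := by
  induction s with
  | zero => simp [eOneMinusQ]
  | succ s ih =>
    have hpull : ∀ r ∈ range (s + 1), (-q⁻¹) ^ (s + 1 - r) * q⁻¹ ^ r * eOneMinusQ r =
        -q⁻¹ * ((-q⁻¹) ^ (s - r) * q⁻¹ ^ r * eOneMinusQ r) := by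
      intro r hr
      rw [Nat.sub_add_comm (mem_range_succ_iff.mp hr), pow_succ]
      ring
    rw [sum_range_succ, sum_congr rfl hpull, ← mul_sum, ih, Nat.sub_self, eOneMinusQ, neg_pow q]
    have hq : q * q⁻¹ = 1 := mul_inv_cancel₀ q_ne_zero
    have hpow : q⁻¹ ^ (s + 1) * q ^ s = q⁻¹ := by
      rw [pow_succ, mul_right_comm, ← mul_pow, inv_mul_cancel₀ q_ne_zero, one_pow, one_mul]
    linear_combination (1 - q) * (-1 : F) ^ s * hpow - (-1 : F) ^ s * hq

/-! Generating series in a variable `t` (the `X` of `SymF⟦X⟧`, not the alphabet `X`):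
`E(t) = ∑ eₙ tⁿ`, `H(t) = ∑ hₙ tⁿ`, `P(t) = ∑ p_{k+1} tᵏ`. Newton's recursions defining `eN` and
`hN` are the differential equations `E' = P(-t) E` and `H' = P(t) H`. -/

noncomputable def eSeries : SymF⟦X⟧ := PowerSeries.mk eN

noncomputable def hSeries : SymF⟦X⟧ := PowerSeries.mk hN

noncomputable def powerSumSeries : SymF⟦X⟧ := PowerSeries.mk fun k => pp (k + 1)

lemma natCast_add_one_mul_eq_smul {A : Type*} [Ring A] [Algebra F A] (n : ℕ) (a : A) :
    a * ((n : A) + 1) = ((n : F) + 1) • a := by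
  rw [Algebra.smul_def, map_add, map_natCast, map_one, ← Nat.cast_add_one]
  exact (Nat.cast_comm _ _).symm

lemma eN_zero : eN 0 = 1 := by rw [eN]

lemma hN_zero : hN 0 = 1 := by rw [hN]

lemma hh_natCast (m : ℕ) : hh m = hN m := by simp [hh]

lemma ee_natCast (m : ℕ) : ee m = eN m := by simp [ee]

lemma derivative_hSeries : d⁄dX SymF hSeries = powerSumSeries * hSeries := by
  ext n : 1
  rw [PowerSeries.coeff_derivative, PowerSeries.coeff_mul,
    Nat.sum_antidiagonal_eq_sum_range_succ_mk]
  simp only [hSeries, powerSumSeries, PowerSeries.coeff_mk]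
  rw [natCast_add_one_mul_eq_smul, hN, smul_smul, mul_inv_cancel₀ (Nat.cast_add_one_ne_zero n),
    one_smul]

lemma derivative_eSeries :
    d⁄dX SymF eSeries = PowerSeries.rescale (-1) powerSumSeries * eSeries := by
  ext n : 1
  rw [PowerSeries.coeff_derivative, PowerSeries.coeff_mul,
    Nat.sum_antidiagonal_eq_sum_range_succ_mk]
  simp only [eSeries, powerSumSeries, PowerSeries.coeff_mk, PowerSeries.coeff_rescale]
  rw [natCast_add_one_mul_eq_smul, eN, smul_smul, mul_inv_cancel₀ (Nat.cast_add_one_ne_zero n),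
    one_smul]
  refine sum_congr rfl fun k _ => ?_
  rw [Algebra.smul_def, map_pow, map_neg, map_one, mul_assoc]

lemma eSeries_mul_rescale_hSeries : eSeries * PowerSeries.rescale (-1) hSeries = 1 := by
  refine PowerSeries.derivative.ext ?_ ?_
  · rw [PowerSeries.derivative_mul, PowerSeries.derivative_rescale, derivative_hSeries,
      derivative_eSeries, map_mul, PowerSeries.derivative_one, map_neg, map_one]
    ring
  · simp [eSeries, hSeries, eN_zero, hN_zero, PowerSeries.rescale_mk]

lemma eN_succ (m : ℕ) :
    eN (m + 1) = ∑ u ∈ range (m + 1), (-1 : F) ^ (m - u) • (hN (m + 1 - u) * eN u) := by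
  have h := congrArg (PowerSeries.coeff (m + 1)) eSeries_mul_rescale_hSeries
  rw [PowerSeries.coeff_mul, Nat.sum_antidiagonal_eq_sum_range_succ_mk, sum_range_succ,
    PowerSeries.coeff_one, if_neg (Nat.succ_ne_zero m)] at h
  simp only [eSeries, hSeries, PowerSeries.coeff_mk, PowerSeries.coeff_rescale, Nat.sub_self,
    pow_zero, hN_zero, mul_one] at h
  rw [add_comm, add_eq_zero_iff_eq_neg, ← sum_neg_distrib] at h
  rw [h]
  refine sum_congr rfl fun u hu => ?_
  rw [Nat.succ_sub (mem_range_succ_iff.mp hu), Algebra.smul_def, map_pow, map_neg, map_one,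
    pow_succ]
  ring

/-! In `(Polynomial SymF)⟦t⟧`, with `z` the variable of the translation `Tq`: the series `E` of
the alphabet `(1-q)z`, namely `∑ e_r[1-q] z^r t^r`, and the coefficient
`∑ (-1)^k p_{k+1}[(1-q)z] t^k` of its Newton differential equation. -/

noncomputable def eSeriesOneMinusQ : (Polynomial SymF)⟦X⟧ :=
  PowerSeries.mk fun r => eOneMinusQ r • Polynomial.X ^ r

noncomputable def pSeriesOneMinusQ : (Polynomial SymF)⟦X⟧ :=
  PowerSeries.mk fun k => ((-1 : F) ^ k * (1 - q ^ (k + 1))) • Polynomial.X ^ (k + 1)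

lemma derivative_eSeriesOneMinusQ :
    d⁄dX _ eSeriesOneMinusQ = pSeriesOneMinusQ * eSeriesOneMinusQ := by
  ext n : 1
  rw [PowerSeries.coeff_derivative, PowerSeries.coeff_mul]
  simp only [eSeriesOneMinusQ, pSeriesOneMinusQ, PowerSeries.coeff_mk]
  have hterm : ∀ x ∈ antidiagonal n,
      ((-1 : F) ^ x.1 * (1 - q ^ (x.1 + 1))) • (Polynomial.X ^ (x.1 + 1) : Polynomial SymF) *
        eOneMinusQ x.2 • Polynomial.X ^ x.2 =
      ((-1 : F) ^ x.1 * (1 - q ^ (x.1 + 1)) * eOneMinusQ x.2) • Polynomial.X ^ (n + 1) := by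
    intro x hx
    rw [smul_mul_smul_comm, ← pow_add, ← mem_antidiagonal.mp hx, add_right_comm]
  rw [sum_congr rfl hterm, ← sum_smul, sum_antidiagonal_eOneMinusQ, natCast_add_one_mul_eq_smul,
    smul_smul, mul_comm]

lemma Tq_pp_succ (k : ℕ) :
    Tq (pp (k + 1)) = Polynomial.C (pp (k + 1)) + (1 - q ^ (k + 1)) • Polynomial.X ^ (k + 1) := by
  rw [pp, Nat.add_sub_cancel, Tq, MvPolynomial.aeval_X, Algebra.smul_def,
    Polynomial.algebraMap_apply, MvPolynomial.algebraMap_eq]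

lemma map_Tq_rescale_powerSumSeries :
    PowerSeries.map (Tq : SymF →+* Polynomial SymF) (PowerSeries.rescale (-1) powerSumSeries) =
      PowerSeries.map Polynomial.C (PowerSeries.rescale (-1) powerSumSeries) +
        pSeriesOneMinusQ := by
  ext k : 1
  simp only [PowerSeries.coeff_map, PowerSeries.coeff_rescale, powerSumSeries, pSeriesOneMinusQ,
    PowerSeries.coeff_mk, map_add, RingHom.coe_coe, map_mul, map_pow, map_neg, map_one, Tq_pp_succ]
  simp only [Algebra.smul_def, map_mul, map_pow, map_neg, map_one]
  ring

lemma map_Tq_eSeries :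
    PowerSeries.map (Tq : SymF →+* Polynomial SymF) eSeries =
      PowerSeries.map Polynomial.C eSeries * eSeriesOneMinusQ := by
  refine PowerSeries.eq_of_derivative_eq_mul (a := PowerSeries.map (Tq : SymF →+* Polynomial SymF)
    (PowerSeries.rescale (-1) powerSumSeries)) ?_ ?_ ?_ ?_
  · rw [PowerSeries.derivative_map, derivative_eSeries, map_mul]
  · rw [PowerSeries.derivative_mul, PowerSeries.derivative_map, derivative_eSeries,
      derivative_eSeriesOneMinusQ, map_Tq_rescale_powerSumSeries, map_mul]
    ring
  · rw [← PowerSeries.coeff_zero_eq_constantCoeff_apply, PowerSeries.coeff_map]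
    simp [eSeries, eN_zero]
  · rw [map_mul, ← PowerSeries.coeff_zero_eq_constantCoeff_apply, PowerSeries.coeff_map]
    simp [eSeries, eN_zero, eSeriesOneMinusQ, eOneMinusQ, PowerSeries.constantCoeff_mk]

lemma Tq_eN (j : ℕ) :
    Tq (eN j) =
      ∑ x ∈ antidiagonal j, eOneMinusQ x.2 • (Polynomial.C (eN x.1) * Polynomial.X ^ x.2) := by
  have h := congrArg (PowerSeries.coeff j) map_Tq_eSeries
  rw [PowerSeries.coeff_map, PowerSeries.coeff_mul] at h
  simpa only [eSeries, eSeriesOneMinusQ, PowerSeries.coeff_mk, PowerSeries.coeff_map,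
    mul_smul_comm, RingHom.coe_coe] using h

lemma Dq_eN (r j : ℕ) : Dq r (eN j) = if r ≤ j then eOneMinusQ r • eN (j - r) else 0 := by
  rw [Dq, Tq_eN, Polynomial.finsetSum_coeff]
  simp only [Polynomial.coeff_smul, Polynomial.coeff_C_mul_X_pow, smul_ite, smul_zero]
  rw [← Nat.sum_antidiagonal_swap]
  simp only [Prod.fst_swap, Prod.snd_swap]
  rw [Nat.sum_antidiagonal_eq_sum_range_succ_mk, sum_ite_eq]
  simp only [mem_range, Nat.lt_succ_iff]

lemma natDegree_Tq_eN_le (j : ℕ) : (Tq (eN j)).natDegree ≤ j :=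
  Polynomial.natDegree_le_iff_coeff_eq_zero.mpr fun r hr => by
    rw [← Dq, Dq_eN, if_neg (by omega)]

lemma Cop_eq_sum_range (m : ℤ) (P : SymF) {N : ℕ} (hN : (Tq P).natDegree < N) :
    Cop m P = (-q⁻¹) ^ (m - 1) • ∑ r ∈ range N, q⁻¹ ^ r • (hh (m + r) * Dq r P) := by
  rw [Cop]
  congr 1
  refine sum_subset (range_subset_range.mpr hN) fun r _ hr => ?_
  rw [Dq, Polynomial.coeff_eq_zero_of_natDegree_lt (by simpa using hr), mul_zero, smul_zero]

lemma Cop_add (m : ℤ) (P Q : SymF) : Cop m (P + Q) = Cop m P + Cop m Q := by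
  set N := (Tq P).natDegree + (Tq Q).natDegree + 1
  have hPQ : (Tq (P + Q)).natDegree < N := by
    rw [map_add]
    exact (Polynomial.natDegree_add_le _ _).trans_lt (by omega)
  rw [Cop_eq_sum_range m _ hPQ, Cop_eq_sum_range m P (show _ < N by omega),
    Cop_eq_sum_range m Q (show _ < N by omega), ← smul_add, ← sum_add_distrib]
  simp only [Dq, map_add, Polynomial.coeff_add, mul_add, smul_add]

lemma Cop_sum {ι : Type*} (m : ℤ) (s : Finset ι) (f : ι → SymF) :
    Cop m (∑ i ∈ s, f i) = ∑ i ∈ s, Cop m (f i) :=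
  map_sum (AddMonoidHom.mk' (Cop m) (Cop_add m)) f s

lemma Cop_eN (m : ℤ) (j : ℕ) :
    Cop m (eN j) = (-q⁻¹) ^ (m - 1) •
      ∑ x ∈ antidiagonal j, (q⁻¹ ^ x.2 * eOneMinusQ x.2) • (hh (m + x.2) * eN x.1) := by
  rw [Cop_eq_sum_range m (eN j) (Nat.lt_succ_of_le (natDegree_Tq_eN_le j)),
    ← Nat.sum_antidiagonal_swap, Nat.sum_antidiagonal_eq_sum_range_succ_mk]
  congr 1
  refine sum_congr rfl fun r hr => ?_
  rw [Dq_eN, if_pos (Nat.lt_succ_iff.mp (mem_range.mp hr)), mul_smul_comm, smul_smul]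
  rfl

lemma neg_q_zpow_mul_neg_inv_zpow {n K j : ℕ} (hj : j ≤ K) (hK : K < n) :
    (-q) ^ ((n : ℤ) - K - 1) * (-q⁻¹) ^ (((n - j : ℕ) : ℤ) - 1) = (-q⁻¹) ^ (K - j) := by
  rw [neg_inv, inv_zpow', ← zpow_add₀ (neg_ne_zero.mpr q_ne_zero), inv_pow, ← zpow_natCast,
    ← zpow_neg]
  congr 1
  omega

lemma sum_Cop_eN {n K : ℕ} (hK : K < n) :
    (-q) ^ ((n : ℤ) - K - 1) • ∑ j ∈ range (K + 1), Cop ((n - j : ℕ) : ℤ) (eN j) =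
      ∑ u ∈ range (K + 1), (-1 : F) ^ (K - u) • (hN (n - u) * eN u) := by
  set f : ℕ → ℕ → SymF := fun u r =>
    ((-q⁻¹) ^ (K - u - r) * q⁻¹ ^ r * eOneMinusQ r) • (hN (n - u) * eN u)
  have hterm : ∀ j ∈ range (K + 1), ∀ x ∈ antidiagonal j,
      ((-q) ^ ((n : ℤ) - K - 1) * (-q⁻¹) ^ (((n - j : ℕ) : ℤ) - 1) *
          (q⁻¹ ^ x.2 * eOneMinusQ x.2)) • (hh (((n - j : ℕ) : ℤ) + x.2) * eN x.1) =
        f x.1 x.2 := by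
    intro j hj x hx
    obtain rfl : j = x.1 + x.2 := (mem_antidiagonal.mp hx).symm
    have hjK := Nat.lt_succ_iff.mp (mem_range.mp hj)
    rw [neg_q_zpow_mul_neg_inv_zpow hjK hK, ← mul_assoc,
      show ((n - (x.1 + x.2) : ℕ) : ℤ) + x.2 = ((n - x.1 : ℕ) : ℤ) by omega, hh_natCast,
      Nat.sub_add_eq]
  calc _ = ∑ j ∈ range (K + 1), ∑ x ∈ antidiagonal j, f x.1 x.2 := by
        rw [smul_sum]
        refine sum_congr rfl fun j hj => ?_
        rw [Cop_eN, smul_smul, smul_sum]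
        exact sum_congr rfl fun x hx => by rw [smul_smul]; exact hterm j hj x hx
    _ = ∑ u ∈ range (K + 1), ∑ r ∈ range (K - u + 1), f u r := by
        simp_rw [Nat.sum_antidiagonal_eq_sum_range_succ f]
        rw [sum_range_diag_flip]
        refine sum_congr rfl fun u hu => ?_
        rw [Nat.sub_add_comm (Nat.lt_succ_iff.mp (mem_range.mp hu))]
    _ = _ := by
        refine sum_congr rfl fun u _ => ?_
        rw [← sum_smul, sum_neg_inv_q_pow_mul_eOneMinusQ]

lemma sum_Cfun_eq_eN (m : ℕ) : ∑ β : Composition m, Cfun β.blocks = eN m := by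
  induction m using Nat.strong_induction_on with
  | _ m ih =>
  cases m with
  | zero =>
    have hnil : ∀ β : Composition 0, β.blocks = [] := fun β => β.blocks_eq_nil.mpr rfl
    simp [hnil, Cfun, eN_zero, composition_card]
  | succ m =>
    have hall :
        univ.filter (fun α : Composition (m + 1) => m + 1 - m ≤ α.blocks.headI) = univ :=
      filter_true_of_mem fun α _ => by have := α.one_le_headI; omega
    calc ∑ β : Composition (m + 1), Cfun β.blocks
        = ∑ j ∈ range (m + 1), Cop ((m + 1 - j : ℕ) : ℤ) (eN j) := by
          rw [← hall, sum_compositions_le_headI Cfun (Nat.lt_succ_self m)]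
          refine sum_congr rfl fun j hj => ?_
          simp only [Cfun, ← Cop_sum, ih j (mem_range.mp hj)]
      _ = (-q) ^ (((m + 1 : ℕ) : ℤ) - m - 1) •
            ∑ j ∈ range (m + 1), Cop ((m + 1 - j : ℕ) : ℤ) (eN j) := by
          rw [show ((m + 1 : ℕ) : ℤ) - m - 1 = 0 by push_cast; ring, zpow_zero, one_smul]
      _ = eN (m + 1) := by rw [sum_Cop_eN (Nat.lt_succ_self m), eN_succ]

/-- The left side is the hook Schur function `s_{(n-k,1^k)}`, written as
`∑_{i ≤ k} (-1)^i h_{n-k+i} e_{k-i}`. -/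
theorem stmt18 (n k : ℕ) (hk : k < n) :
    ∑ i ∈ Finset.range (k + 1),
        ((-1 : F) ^ i) • (hh ((n : ℤ) - k + i) * ee ((k : ℤ) - i)) =
      ((-q : F) ^ ((n : ℤ) - k - 1)) •
        ∑ α ∈ Finset.univ.filter fun α : Composition n => n - k ≤ α.blocks.headI,
          Cfun α.blocks := by
  simp only [sum_compositions_le_headI Cfun hk, Cfun, ← Cop_sum, sum_Cfun_eq_eN, sum_Cop_eN hk]
  rw [← sum_range_reflect]
  refine sum_congr rfl fun u hu => ?_
  have hu' := mem_range.mp hu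
  rw [show (n : ℤ) - k + ↑(k + 1 - 1 - u) = ((n - u : ℕ) : ℤ) by omega,
    show (k : ℤ) - ↑(k + 1 - 1 - u) = ((u : ℕ) : ℤ) by omega, hh_natCast, ee_natCast,
    show k + 1 - 1 - u = k - u by omega]
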